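/- (Maximum-likelihood tree structure, equation (2) of the paper.) Let d ≥ 2, let X_1, …, X_d be finite nonempty alphabets, let z_1, …, z_n be n samples in X_1 × ⋯ × X_d whose empirical pmf P̂ satisfies P̂(x) > 0 for all x, and let T be a rooted spanning tree on {1,…,d} with root r and parent map π. Then the maximum of the log-likelihood Σ_{k=1}^n ln Q(z_k) over all pmfs Q with Q(x) > 0 that factorize along T (i.e., Q(x) = Q_{X_r}(x_r) · Π_{i ≠ r} Q_{X_i|X_{π(i)}}(x_i|x_{π(i)})) equals n · ( Σ_{i ≠ r} I(P̂_{X_i, X_{π(i)}}) − Σ_{i=1}^d H(P̂_{X_i}) ). In particular, since Σ_{i=1}^d H(P̂_{X_i}) does not depend on T, the spanning tree maximizing the likelihood is exactly the maximum-weight spanning tree with edge weights given by the empirical mutual informations I(P̂_e). -/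

import Mathlib

/-- Shannon entropy of a pmf `P` on a finite alphabet, with natural logarithm and the
convention `0 ln 0 = 0`. -/
noncomputable def entropy {A : Type*} [Fintype A] (P : A → ℝ) : ℝ :=
  ∑ a, -(P a * Real.log (P a))

/-- Mutual information of a joint pmf `P` on `A × B`: `I(P) = H(P1) + H(P2) − H(P)`. -/
noncomputable def mutualInfo {A B : Type*} [Fintype A] [Fintype B] (P : A × B → ℝ) : ℝ :=
  entropy (fun a => ∑ b, P (a, b)) + entropy (fun b => ∑ a, P (a, b)) - entropy P

/-- Kullback–Leibler divergence `D(P ‖ Q) = Σ_{a : P(a) > 0} P(a) ln(P(a)/Q(a))`. -/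
noncomputable def klDiv {A : Type*} [Fintype A] (P Q : A → ℝ) : ℝ :=
  ∑ a ∈ Finset.univ.filter (fun a => 0 < P a), P a * Real.log (P a / Q a)

/-- One-coordinate marginal `P_{X_i}` of a pmf `P` on a finite product. -/
noncomputable def marg {d : ℕ} {X : Fin d → Type*} [∀ i, Fintype (X i)]
    [∀ i, DecidableEq (X i)] (P : (∀ i, X i) → ℝ) (i : Fin d) : X i → ℝ :=
  fun a => ∑ x : ∀ j, X j, if x i = a then P x else 0

/-- Two-coordinate marginal `P_{X_i, X_j}` of a pmf `P` on a finite product. -/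
noncomputable def pairMarg {d : ℕ} {X : Fin d → Type*} [∀ i, Fintype (X i)]
    [∀ i, DecidableEq (X i)] (P : (∀ i, X i) → ℝ) (i j : Fin d) : X i × X j → ℝ :=
  fun p => ∑ x : ∀ j', X j', if x i = p.1 ∧ x j = p.2 then P x else 0

/-- Conditional pmf `P_{X_i | X_j}(a | b) = P_{X_i,X_j}(a,b) / P_{X_j}(b)`. -/
noncomputable def condProb {d : ℕ} {X : Fin d → Type*} [∀ i, Fintype (X i)]
    [∀ i, DecidableEq (X i)] (P : (∀ i, X i) → ℝ) (i j : Fin d) (a : X i) (b : X j) : ℝ :=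
  pairMarg P i j (a, b) / marg P j b

/-- The projection of `P` onto the rooted spanning tree with root `r` and parent map `π`:
`Q_T(x) = P_{X_r}(x_r) · Π_{i ≠ r} P_{X_i | X_{π(i)}}(x_i | x_{π(i)})`. -/
noncomputable def treeProj {d : ℕ} {X : Fin d → Type*} [∀ i, Fintype (X i)]
    [∀ i, DecidableEq (X i)] (P : (∀ i, X i) → ℝ) (r : Fin d) (π : Fin d → Fin d) :
    (∀ i, X i) → ℝ :=
  fun x => marg P r (x r) *
    ∏ i ∈ Finset.univ.filter (fun i => i ≠ r), condProb P i (π i) (x i) (x (π i))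

/-- Empirical distribution of the sample `z = (z_1,…,z_n)`:
`P̂(a) = (1/n) Σ_{k=1}^n 1{z_k = a}`. -/
noncomputable def empDist {A : Type*} [Fintype A] [DecidableEq A] {n : ℕ}
    (z : Fin n → A) : A → ℝ :=
  fun a => (∑ k, if z k = a then (1 : ℝ) else 0) / n

/-!
For a pmf `Q` factorizing along the tree, `∑ₓ P̂(x) ln Q(x)` splits into a root term
`∑ P̂_r ln Q_r` and one term `∑ P̂_{i,π(i)} ln Q_{i|π(i)}` per edge, since each factor depends on at
most two coordinates. By Gibbs' inequality each term is largest for `Q_r = P̂_r`, resp.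
`Q_{i|π(i)} = P̂_{i|π(i)}`, where it equals `-H(P̂_r)`, resp. `I(P̂_{i,π(i)}) - H(P̂_i)`.
The bound is attained by the tree projection `P̂_r ∏ P̂_{i|π(i)}`: summing out coordinates from
the deepest nodes inwards, every conditional factor sums to `1`, so its root marginal and edge
conditionals are those of `P̂`, i.e. it factorizes along the tree. Finally `∑ₖ ln Q(z_k)` is `n`
times the `P̂`-expectation of `ln Q`.
-/

open Finset Function

theorem sum_mul_log_le_sum_mul_log {A : Type*} [Fintype A] {P Q : A → ℝ} (hP : ∀ a, 0 < P a)
    (hQ : ∀ a, 0 < Q a) (hsum : ∑ a, Q a ≤ ∑ a, P a) :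
    ∑ a, P a * Real.log (Q a) ≤ ∑ a, P a * Real.log (P a) := by
  have key : ∀ a, P a * Real.log (Q a) ≤ P a * Real.log (P a) + (Q a - P a) := fun a => by
    have h := mul_le_mul_of_nonneg_left
      (Real.log_le_sub_one_of_pos (div_pos (hQ a) (hP a))) (hP a).le
    rw [Real.log_div (hQ a).ne' (hP a).ne', mul_sub, mul_sub, mul_div_cancel₀ _ (hP a).ne',
      mul_one] at h
    linarith
  have := sum_le_sum fun a (_ : a ∈ univ) => key a
  rw [sum_add_distrib, sum_sub_distrib] at this
  linarith

section JointPmf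

variable {A B : Type*} [Fintype A] {W : A × B → ℝ}

theorem mul_log_div_sum_fst (hW : ∀ p, 0 < W p) (p : A × B) :
    W p * Real.log (W p / ∑ a, W (a, p.2)) =
      W p * Real.log (W p) - W p * Real.log (∑ a, W (a, p.2)) := by
  have hsum : 0 < ∑ a, W (a, p.2) :=
    (hW p).trans_le (single_le_sum (fun a _ => (hW (a, p.2)).le) (mem_univ p.1))
  rw [Real.log_div (hW p).ne' hsum.ne', mul_sub]

theorem sum_mul_log_le_sum_mul_log_div_sum_fst [Fintype B] (hW : ∀ p, 0 < W p) {K : A → B → ℝ}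
    (hK : ∀ a b, 0 < K a b) (hKsum : ∀ b, ∑ a, K a b = 1) :
    ∑ p, W p * Real.log (K p.1 p.2) ≤ ∑ p, W p * Real.log (W p / ∑ a, W (a, p.2)) := by
  set W₂ : B → ℝ := fun b => ∑ a, W (a, b)
  have hW₂ : ∀ p : A × B, 0 < W₂ p.2 := fun p =>
    (hW p).trans_le (single_le_sum (fun a _ => (hW (a, p.2)).le) (mem_univ p.1))
  have hmass : ∑ p : A × B, K p.1 p.2 * W₂ p.2 = ∑ p, W p := by
    rw [Fintype.sum_prod_type, sum_comm]
    simp only [← sum_mul, hKsum, one_mul, W₂]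
    rw [Fintype.sum_prod_type, sum_comm]
  have hgibbs := sum_mul_log_le_sum_mul_log hW (fun p => mul_pos (hK p.1 p.2) (hW₂ p))
    hmass.le
  simp only [Real.log_mul (hK _ _).ne' (hW₂ _).ne', mul_add, sum_add_distrib] at hgibbs
  simp only [mul_log_div_sum_fst hW, sum_sub_distrib]
  linarith

theorem sum_mul_log_eq_neg_entropy {C : Type*} [Fintype C] (P : C → ℝ) :
    ∑ c, P c * Real.log (P c) = -entropy P := by
  simp [entropy]

theorem sum_mul_log_div_sum_fst_eq_mutualInfo_sub [Fintype B] (hW : ∀ p, 0 < W p) :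
    ∑ p, W p * Real.log (W p / ∑ a, W (a, p.2)) =
      mutualInfo W - entropy (fun a => ∑ b, W (a, b)) := by
  have hsnd : ∑ p : A × B, W p * Real.log (∑ a, W (a, p.2)) =
      ∑ b, (∑ a, W (a, b)) * Real.log (∑ a, W (a, b)) := by
    rw [Fintype.sum_prod_type, sum_comm]
    simp only [← sum_mul]
  rw [mutualInfo, ← neg_neg (entropy W), ← neg_neg (entropy fun b => ∑ a, W (a, b)),
    ← sum_mul_log_eq_neg_entropy, ← sum_mul_log_eq_neg_entropy, ← hsnd]
  simp only [mul_log_div_sum_fst hW, sum_sub_distrib]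
  ring

end JointPmf

theorem prod_card_ne_zero {ι : Type*} {X : ι → Type*} [∀ i, Fintype (X i)] [∀ i, Nonempty (X i)]
    (s : Finset ι) : ∏ j ∈ s, (Fintype.card (X j) : ℝ) ≠ 0 :=
  prod_ne_zero_iff.2 fun _ _ => Nat.cast_ne_zero.2 Fintype.card_ne_zero

section PiSums

variable {ι : Type*} [Fintype ι] [DecidableEq ι] {X : ι → Type*} [∀ i, Fintype (X i)]

theorem sum_sum_update (j : ι) (H : (∀ i, X i) → ℝ) :
    ∑ a : X j, ∑ x, H (update x j a) = Fintype.card (X j) * ∑ x, H x := by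
  let e : Equiv.Perm (X j × ∀ i, X i) :=
    Involutive.toPerm (fun p => (p.2 j, update p.2 j p.1)) fun p => by simp
  calc ∑ a : X j, ∑ x, H (update x j a) = ∑ p, H (e p).2 := by
        rw [Fintype.sum_prod_type]; rfl
    _ = ∑ p : X j × ∀ i, X i, H p.2 := Equiv.sum_comp e fun p => H p.2
    _ = _ := by simp only [Fintype.sum_prod_type, sum_const, card_univ, nsmul_eq_mul]

theorem card_mul_sum_mul_apply_apply {j k : ι} (hkj : k ≠ j) {F : (∀ i, X i) → ℝ}
    (hF : ∀ x a, F (update x j a) = F x) (G : X j → X k → ℝ) :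
    Fintype.card (X j) * ∑ x, F x * G (x j) (x k) = ∑ x, F x * ∑ a, G a (x k) := by
  rw [← sum_sum_update j, sum_comm]
  simp only [hF, update_self, update_of_ne hkj, mul_sum]

theorem sum_apply_eq_prod_card_mul [∀ i, Nonempty (X i)] (j : ι) (φ : X j → ℝ) :
    ∑ x : ∀ i, X i, φ (x j) = (∏ k ∈ univ.erase j, (Fintype.card (X k) : ℝ)) * ∑ a, φ a := by
  have h := sum_sum_update j fun x => φ (x j)
  simp only [update_self, sum_const, card_univ, Fintype.card_pi, nsmul_eq_mul, ← mul_sum,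
    ← mul_prod_erase univ _ (mem_univ j)] at h
  push_cast at h
  rw [mul_assoc] at h
  exact (mul_left_cancel₀ (Nat.cast_ne_zero.2 Fintype.card_ne_zero) h).symm

end PiSums

section TreeProduct

variable {ι : Type*} {X : ι → Type*}

def treeProd (r : ι) (π : ι → ι) (f : X r → ℝ) (K : ∀ i, X i → X (π i) → ℝ) (S : Finset ι)
    (x : ∀ i, X i) : ℝ :=
  f (x r) * ∏ i ∈ S, K i (x i) (x (π i))

def treeDepth [DecidableEq ι] {r : ι} {π : ι → ι} (htree : ∀ i, ∃ k, π^[k] i = r) (i : ι) : ℕ :=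
  Nat.find (htree i)

def IsParentClosed (r : ι) (π : ι → ι) (S : Finset ι) : Prop :=
  ∀ i ∈ S, π i = r ∨ π i ∈ S

variable [DecidableEq ι] {r : ι} {π : ι → ι}

theorem treeDepth_parent_add_one (htree : ∀ i, ∃ k, π^[k] i = r) {i : ι} (hi : i ≠ r) :
    treeDepth htree (π i) + 1 = treeDepth htree i := by
  have hpos : treeDepth htree i ≠ 0 := fun h => hi (by
    have := Nat.find_spec (htree i)
    rwa [show Nat.find (htree i) = 0 from h, iterate_zero, id] at this)
  have hle : treeDepth htree i ≤ treeDepth htree (π i) + 1 :=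
    Nat.find_le (by rw [iterate_succ_apply]; exact Nat.find_spec (htree (π i)))
  have hge : treeDepth htree (π i) ≤ treeDepth htree i - 1 := Nat.find_le (by
    rw [← iterate_succ_apply, Nat.succ_eq_add_one, Nat.sub_add_cancel (Nat.pos_of_ne_zero hpos)]
    exact Nat.find_spec (htree i))
  omega

theorem parent_ne_self (htree : ∀ i, ∃ k, π^[k] i = r) {i : ι} (hi : i ≠ r) : π i ≠ i := by
  intro h
  have := treeDepth_parent_add_one htree hi
  rw [h] at this
  omega

variable {f : X r → ℝ} {K : ∀ i, X i → X (π i) → ℝ}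

theorem treeProd_eq_treeProd_erase_mul {S : Finset ι} {j : ι} (hj : j ∈ S) (x : ∀ i, X i) :
    treeProd r π f K S x = treeProd r π f K (S.erase j) x * K j (x j) (x (π j)) := by
  rw [treeProd, treeProd, ← mul_prod_erase S _ hj]
  ring

theorem treeProd_update {S : Finset ι} {j : ι} (hjr : j ≠ r) (hjS : j ∉ S)
    (hleaf : ∀ i ∈ S, π i ≠ j) (x : ∀ i, X i) (a : X j) :
    treeProd r π f K S (update x j a) = treeProd r π f K S x := by
  simp only [treeProd, update_of_ne hjr.symm]
  congr 1
  exact prod_congr rfl fun i hi => by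
    rw [update_of_ne (ne_of_mem_of_not_mem hi hjS), update_of_ne (hleaf i hi)]

variable [Fintype ι] [∀ i, Fintype (X i)]

theorem isParentClosed_erase_root : IsParentClosed r π (univ.erase r) := fun i _ =>
  (em (π i = r)).imp_right fun h => mem_erase.2 ⟨h, mem_univ _⟩

theorem card_mul_sum_treeProd_mul {S : Finset ι} {j : ι} (hK : ∀ b, ∑ a, K j a b = 1)
    (hj : j ∈ S) (hjr : j ≠ r) (hleaf : ∀ i ∈ S, π i ≠ j) {g : (∀ i, X i) → ℝ}
    (hg : ∀ x a, g (update x j a) = g x) :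
    Fintype.card (X j) * ∑ x, treeProd r π f K S x * g x =
      ∑ x, treeProd r π f K (S.erase j) x * g x := by
  have hF : ∀ x a, treeProd r π f K (S.erase j) (update x j a) * g (update x j a) =
      treeProd r π f K (S.erase j) x * g x := fun x a => by
    rw [treeProd_update hjr (notMem_erase j S) (fun i hi => hleaf i (mem_of_mem_erase hi)), hg]
  simp only [treeProd_eq_treeProd_erase_mul hj, mul_right_comm _ (K j _ _)]
  rw [card_mul_sum_mul_apply_apply (hleaf j hj) hF (K j)]
  simp only [hK, mul_one]

theorem sum_treeProd_mul_eq_prod_card_mul (htree : ∀ i, ∃ k, π^[k] i = r)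
    (hK : ∀ i ≠ r, ∀ b, ∑ a, K i a b = 1) {S C : Finset ι} (hrS : r ∉ S)
    (hS : IsParentClosed r π S) (hC : IsParentClosed r π C) (hCS : C ⊆ S) {g : (∀ i, X i) → ℝ}
    (hg : ∀ j ∉ C, j ≠ r → ∀ x a, g (update x j a) = g x) :
    ∑ x, treeProd r π f K C x * g x =
      (∏ j ∈ S \ C, (Fintype.card (X j) : ℝ)) * ∑ x, treeProd r π f K S x * g x := by
  induction S using Finset.strongInduction with
  | H S ih =>
  rcases (S \ C).eq_empty_or_nonempty with hSC | hSC
  · rw [hSC, prod_empty, one_mul, (sdiff_eq_empty_iff_subset.1 hSC).antisymm hCS]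
  obtain ⟨j, hj, hmax⟩ := exists_max_image (S \ C) (treeDepth htree) hSC
  rw [mem_sdiff] at hj
  have hjr : j ≠ r := ne_of_mem_of_not_mem hj.1 hrS
  have hleaf : ∀ i ∈ S, π i ≠ j := by
    rintro i hi rfl
    have hiC : i ∉ C := fun hiC => (hC i hiC).elim hjr hj.2
    have := hmax i (mem_sdiff.2 ⟨hi, hiC⟩)
    have := treeDepth_parent_add_one htree (ne_of_mem_of_not_mem hi hrS)
    omega
  have hS' : IsParentClosed r π (S.erase j) := fun i hi =>
    (hS i (mem_of_mem_erase hi)).imp_right fun h =>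
      mem_erase.2 ⟨hleaf i (mem_of_mem_erase hi), h⟩
  have hCS' : C ⊆ S.erase j := fun c hc => mem_erase.2 ⟨ne_of_mem_of_not_mem hc hj.2, hCS hc⟩
  rw [ih (S.erase j) (erase_ssubset hj.1) (fun h => hrS (mem_of_mem_erase h)) hS' hCS',
    ← card_mul_sum_treeProd_mul (hK j hjr) hj.1 hjr hleaf (hg j hj.2 hjr), ← mul_assoc,
    erase_sdiff_comm, prod_erase_mul _ _ (mem_sdiff.2 hj)]

variable [∀ i, Nonempty (X i)]

theorem sum_treeProd_mul_apply_root (htree : ∀ i, ∃ k, π^[k] i = r)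
    (hK : ∀ i ≠ r, ∀ b, ∑ a, K i a b = 1) (g : X r → ℝ) :
    ∑ x, treeProd r π f K (univ.erase r) x * g (x r) = ∑ a, f a * g a := by
  have h := sum_treeProd_mul_eq_prod_card_mul (f := f) htree hK (notMem_erase r univ)
    isParentClosed_erase_root (by simp [IsParentClosed]) (empty_subset _)
    (g := fun x => g (x r)) fun j _ hjr x a => by rw [update_of_ne hjr.symm]
  have h0 : ∀ x : ∀ i, X i, treeProd r π f K ∅ x = f (x r) := fun x => by simp [treeProd]
  simp only [h0, sdiff_empty] at h
  rw [sum_apply_eq_prod_card_mul r fun a => f a * g a] at h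
  exact (mul_left_cancel₀ (prod_card_ne_zero _) h).symm

theorem sum_treeProd_mul_apply_edge (htree : ∀ i, ∃ k, π^[k] i = r)
    (hK : ∀ i ≠ r, ∀ b, ∑ a, K i a b = 1) {i : ι} (hi : i ≠ r) (h : X i → X (π i) → ℝ) :
    ∑ x, treeProd r π f K (univ.erase r) x * h (x i) (x (π i)) =
      ∑ x, treeProd r π f K (univ.erase r) x * ∑ a, K i a (x (π i)) * h a (x (π i)) := by
  -- Among the nodes no deeper than `i`, the node `i` is a leaf: sum out `x i` there.
  set C := (univ.erase r).filter fun j => treeDepth htree j ≤ treeDepth htree i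
  have hiC : i ∈ C := by simp [C, hi]
  have hC : IsParentClosed r π C := fun j hj => by
    simp only [C, mem_filter, mem_erase, mem_univ, and_true] at hj ⊢
    have := treeDepth_parent_add_one htree hj.1
    by_cases hπj : π j = r
    · exact .inl hπj
    · exact .inr ⟨hπj, by omega⟩
  have hleaf : ∀ j ∈ C, π j ≠ i := by
    rintro j hj rfl
    simp only [C, mem_filter, mem_erase] at hj
    have := treeDepth_parent_add_one htree hj.1.1
    omega
  have hπi : π i ≠ i := parent_ne_self htree hi
  have hinv : ∀ j ∉ C, j ≠ r → i ≠ j ∧ π i ≠ j := fun j hjC hjr =>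
    ⟨fun h => hjC (h ▸ hiC), fun h => hjr ((hC i hiC).resolve_right (h ▸ hjC) ▸ h.symm)⟩
  have hedge : ∑ x, treeProd r π f K C x * h (x i) (x (π i)) =
      ∑ x, treeProd r π f K C x * ∑ a, K i a (x (π i)) * h a (x (π i)) := by
    have hF := treeProd_update (f := f) (K := K) hi (notMem_erase i C)
      fun j hj => hleaf j (mem_of_mem_erase hj)
    apply mul_left_cancel₀ (Nat.cast_ne_zero.2 (Fintype.card_ne_zero (α := X i)))
    rw [card_mul_sum_treeProd_mul (g := fun x => ∑ a, K i a (x (π i)) * h a (x (π i)))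
      (hK i hi) hiC hi hleaf fun x a => by rw [update_of_ne hπi]]
    simp only [treeProd_eq_treeProd_erase_mul hiC, mul_assoc]
    exact card_mul_sum_mul_apply_apply hπi hF fun a b => K i a b * h a b
  have hprune := fun g hg => sum_treeProd_mul_eq_prod_card_mul (f := f) htree hK
    (notMem_erase r univ) isParentClosed_erase_root hC (filter_subset _ _) (g := g) hg
  rw [hprune, hprune] at hedge
  · exact mul_left_cancel₀ (prod_card_ne_zero _) hedge
  · intro j hjC hjr x a
    rw [update_of_ne (hinv j hjC hjr).2]
  · intro j hjC hjr x a
    rw [update_of_ne (hinv j hjC hjr).1, update_of_ne (hinv j hjC hjr).2]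

end TreeProduct

section Marginals

variable {d : ℕ} {X : Fin d → Type*} [∀ i, Fintype (X i)] [∀ i, DecidableEq (X i)]
  {P : (∀ i, X i) → ℝ}

theorem sum_marg_mul (P : (∀ i, X i) → ℝ) (i : Fin d) (g : X i → ℝ) :
    ∑ a, marg P i a * g a = ∑ x, P x * g (x i) := by
  simp only [marg, sum_mul, ite_mul, zero_mul]
  rw [sum_comm]
  simp

theorem sum_marg (P : (∀ i, X i) → ℝ) (i : Fin d) : ∑ a, marg P i a = ∑ x, P x := by
  simpa using sum_marg_mul P i fun _ => 1

theorem sum_pairMarg_mul (P : (∀ i, X i) → ℝ) (i j : Fin d) (g : X i → X j → ℝ) :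
    ∑ p, pairMarg P i j p * g p.1 p.2 = ∑ x, P x * g (x i) (x j) := by
  simp only [pairMarg, sum_mul, ite_mul, zero_mul]
  rw [sum_comm]
  refine sum_congr rfl fun x _ => ?_
  rw [Fintype.sum_prod_type]
  simp [ite_and]

theorem sum_pairMarg_fst (P : (∀ i, X i) → ℝ) (i j : Fin d) (a : X i) :
    ∑ b, pairMarg P i j (a, b) = marg P i a := by
  simp only [pairMarg, marg]
  rw [sum_comm]
  refine sum_congr rfl fun x _ => ?_
  by_cases h : x i = a <;> simp [h]

theorem sum_pairMarg_snd (P : (∀ i, X i) → ℝ) (i j : Fin d) (b : X j) :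
    ∑ a, pairMarg P i j (a, b) = marg P j b := by
  simp only [pairMarg, marg]
  rw [sum_comm]
  simp [ite_and]

theorem condProb_eq_div_sum (P : (∀ i, X i) → ℝ) (i j : Fin d) (a : X i) (b : X j) :
    condProb P i j a b = pairMarg P i j (a, b) / ∑ a', pairMarg P i j (a', b) := by
  rw [condProb, sum_pairMarg_snd]

variable [∀ i, Nonempty (X i)]

theorem marg_pos (hP : ∀ x, 0 < P x) (i : Fin d) (a : X i) : 0 < marg P i a :=
  sum_pos' (fun x _ => by split_ifs <;> simp [(hP x).le])
    ⟨update (Classical.arbitrary _) i a, mem_univ _, by simp [hP]⟩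

theorem pairMarg_pos (hP : ∀ x, 0 < P x) {i j : Fin d} (hij : i ≠ j) (p : X i × X j) :
    0 < pairMarg P i j p :=
  sum_pos' (fun x _ => by split_ifs <;> simp [(hP x).le])
    ⟨update (update (Classical.arbitrary _) j p.2) i p.1, mem_univ _, by
      simp [update_of_ne hij.symm, hP]⟩

theorem condProb_pos (hP : ∀ x, 0 < P x) {i j : Fin d} (hij : i ≠ j) (a : X i) (b : X j) :
    0 < condProb P i j a b :=
  div_pos (pairMarg_pos hP hij (a, b)) (marg_pos hP j b)

theorem sum_condProb (hP : ∀ x, 0 < P x) (i j : Fin d) (b : X j) :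
    ∑ a, condProb P i j a b = 1 := by
  simp only [condProb, ← sum_div, sum_pairMarg_snd, div_self (marg_pos hP j b).ne']

end Marginals

section TreeProjection

variable {d : ℕ} {X : Fin d → Type*} [∀ i, Fintype (X i)] [∀ i, DecidableEq (X i)]

theorem treeProj_eq_treeProd (P : (∀ i, X i) → ℝ) (r : Fin d) (π : Fin d → Fin d) :
    treeProj P r π = treeProd r π (marg P r) (fun i => condProb P i (π i)) (univ.erase r) := by
  funext x
  simp only [treeProj, treeProd, filter_ne']

variable [∀ i, Nonempty (X i)] {r : Fin d} {π : Fin d → Fin d}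

theorem marg_treeProd_root (htree : ∀ i, ∃ k, π^[k] i = r) {f : X r → ℝ}
    {K : ∀ i, X i → X (π i) → ℝ} (hK : ∀ i ≠ r, ∀ b, ∑ a, K i a b = 1) :
    marg (treeProd r π f K (univ.erase r)) r = f := by
  funext a
  have h := sum_treeProd_mul_apply_root (f := f) htree hK fun b => if b = a then 1 else 0
  rw [← sum_marg_mul _ r fun b => if b = a then (1 : ℝ) else 0] at h
  simpa using h

theorem pairMarg_treeProd_parent (htree : ∀ i, ∃ k, π^[k] i = r) {f : X r → ℝ}
    {K : ∀ i, X i → X (π i) → ℝ} (hK : ∀ i ≠ r, ∀ b, ∑ a, K i a b = 1) {i : Fin d}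
    (hi : i ≠ r) (a : X i) (b : X (π i)) :
    pairMarg (treeProd r π f K (univ.erase r)) i (π i) (a, b) =
      K i a b * marg (treeProd r π f K (univ.erase r)) (π i) b := by
  have h := sum_treeProd_mul_apply_edge (f := f) htree hK hi
    fun a' b' => if (a', b') = (a, b) then 1 else 0
  have hsum : ∀ c, ∑ a', K i a' c * (if (a', c) = (a, b) then 1 else 0) =
      if c = b then K i a b else 0 := fun c => by by_cases hc : c = b <;> simp [hc]
  rw [← sum_pairMarg_mul _ i (π i) fun a' b' => if (a', b') = (a, b) then (1 : ℝ) else 0] at h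
  simp only [hsum] at h
  rw [← sum_marg_mul _ (π i) fun c => if c = b then K i a b else 0] at h
  simpa [mul_comm] using h

theorem condProb_treeProd_parent (htree : ∀ i, ∃ k, π^[k] i = r) {f : X r → ℝ}
    {K : ∀ i, X i → X (π i) → ℝ} (hK : ∀ i ≠ r, ∀ b, ∑ a, K i a b = 1)
    (hpos : ∀ x, 0 < treeProd r π f K (univ.erase r) x) {i : Fin d} (hi : i ≠ r) :
    condProb (treeProd r π f K (univ.erase r)) i (π i) = K i := by
  funext a b
  rw [condProb, pairMarg_treeProd_parent htree hK hi,
    mul_div_cancel_right₀ _ (marg_pos hpos _ b).ne']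

variable {P : (∀ i, X i) → ℝ}

theorem treeProj_pos (htree : ∀ i, ∃ k, π^[k] i = r) (hP : ∀ x, 0 < P x) (x : ∀ i, X i) :
    0 < treeProj P r π x := by
  rw [treeProj_eq_treeProd]
  exact mul_pos (marg_pos hP r _) (prod_pos fun i hi =>
    condProb_pos hP (parent_ne_self htree (ne_of_mem_erase hi)).symm _ _)

theorem sum_treeProj (htree : ∀ i, ∃ k, π^[k] i = r) (hP : ∀ x, 0 < P x) :
    ∑ x, treeProj P r π x = ∑ x, P x := by
  rw [← sum_marg _ r, treeProj_eq_treeProd,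
    marg_treeProd_root htree fun i _ => sum_condProb hP i (π i), sum_marg]

theorem treeProj_treeProj (htree : ∀ i, ∃ k, π^[k] i = r) (hP : ∀ x, 0 < P x) :
    treeProj (treeProj P r π) r π = treeProj P r π := by
  have hK : ∀ i ≠ r, ∀ b, ∑ a, condProb P i (π i) a b = 1 := fun i _ => sum_condProb hP i (π i)
  have hpos := treeProj_pos htree hP
  rw [treeProj_eq_treeProd P] at hpos ⊢
  rw [treeProj_eq_treeProd, marg_treeProd_root htree hK]
  funext x
  simp only [treeProd]
  congr 1
  exact prod_congr rfl fun i hi => by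
    rw [condProb_treeProd_parent htree hK hpos (ne_of_mem_erase hi)]

theorem sum_mul_log_treeProj (htree : ∀ i, ∃ k, π^[k] i = r) {Q : (∀ i, X i) → ℝ}
    (hQ : ∀ x, 0 < Q x) (P : (∀ i, X i) → ℝ) :
    ∑ x, P x * Real.log (treeProj Q r π x) =
      ∑ a, marg P r a * Real.log (marg Q r a) + ∑ i ∈ univ.erase r,
        ∑ p, pairMarg P i (π i) p * Real.log (condProb Q i (π i) p.1 p.2) := by
  have hcond : ∀ i ∈ univ.erase r, ∀ a b, condProb Q i (π i) a b ≠ 0 := fun i hi a b =>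
    (condProb_pos hQ (parent_ne_self htree (ne_of_mem_erase hi)).symm a b).ne'
  have hlog : ∀ x, Real.log (treeProj Q r π x) = Real.log (marg Q r (x r)) +
      ∑ i ∈ univ.erase r, Real.log (condProb Q i (π i) (x i) (x (π i))) := fun x => by
    rw [treeProj_eq_treeProd, treeProd, Real.log_mul (marg_pos hQ r _).ne'
      (prod_ne_zero_iff.2 fun i hi => hcond i hi _ _), Real.log_prod fun i hi => hcond i hi _ _]
  simp only [hlog, mul_add, mul_sum, sum_add_distrib, sum_marg_mul]
  rw [sum_comm]
  exact congrArg _ <| sum_congr rfl fun i _ =>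
    (sum_pairMarg_mul P i (π i) fun a b => Real.log (condProb Q i (π i) a b)).symm

theorem sum_mul_log_treeProj_self (htree : ∀ i, ∃ k, π^[k] i = r) (hP : ∀ x, 0 < P x) :
    ∑ x, P x * Real.log (treeProj P r π x) =
      ∑ i ∈ univ.filter (fun i => i ≠ r), mutualInfo (pairMarg P i (π i)) -
        ∑ i, entropy (marg P i) := by
  have hedge : ∀ i ∈ univ.erase r,
      ∑ p, pairMarg P i (π i) p * Real.log (condProb P i (π i) p.1 p.2) =
        mutualInfo (pairMarg P i (π i)) - entropy (marg P i) := fun i hi => by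
    have hπi := parent_ne_self htree (ne_of_mem_erase hi)
    simp only [condProb_eq_div_sum, Prod.mk.eta,
      sum_mul_log_div_sum_fst_eq_mutualInfo_sub (pairMarg_pos hP hπi.symm), sum_pairMarg_fst]
  rw [sum_mul_log_treeProj htree hP, filter_ne', ← add_sum_erase univ _ (mem_univ r),
    sum_mul_log_eq_neg_entropy, sum_congr rfl hedge, sum_sub_distrib]
  ring

theorem sum_mul_log_le_sum_mul_log_treeProj (htree : ∀ i, ∃ k, π^[k] i = r)
    (hP : ∀ x, 0 < P x) {Q : (∀ i, X i) → ℝ} (hQ : ∀ x, 0 < Q x) (hsum : ∑ x, Q x = ∑ x, P x)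
    (hfac : ∀ x, Q x = treeProj Q r π x) :
    ∑ x, P x * Real.log (Q x) ≤ ∑ x, P x * Real.log (treeProj P r π x) := by
  calc ∑ x, P x * Real.log (Q x) = ∑ x, P x * Real.log (treeProj Q r π x) :=
        sum_congr rfl fun x _ => by rw [← hfac x]
    _ ≤ _ := by
      rw [sum_mul_log_treeProj htree hQ, sum_mul_log_treeProj htree hP]
      refine add_le_add (sum_mul_log_le_sum_mul_log (marg_pos hP r) (marg_pos hQ r)
        (by rw [sum_marg, sum_marg, hsum])) (sum_le_sum fun i hi => ?_)
      have hπi := parent_ne_self htree (ne_of_mem_erase hi)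
      simpa only [condProb_eq_div_sum P, Prod.mk.eta] using
        sum_mul_log_le_sum_mul_log_div_sum_fst (pairMarg_pos hP hπi.symm)
          (condProb_pos hQ hπi.symm) (sum_condProb hQ i (π i))

end TreeProjection

theorem sum_empDist_mul {A : Type*} [Fintype A] [DecidableEq A] {n : ℕ} (z : Fin n → A)
    (F : A → ℝ) : ∑ a, empDist z a * F a = (∑ k, F (z k)) / n := by
  simp only [empDist, div_mul_eq_mul_div, ← sum_div, sum_mul, ite_mul, one_mul, zero_mul]
  rw [sum_comm]
  simp

theorem maxLoglikelihood_tree_eq_general {d : ℕ} {X : Fin d → Type*}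
    [∀ i, Fintype (X i)] [∀ i, Nonempty (X i)] [∀ i, DecidableEq (X i)]
    (n : ℕ) (z : Fin n → (∀ i, X i))
    (hemp : ∀ x : ∀ i, X i, 0 < empDist z x)
    (r : Fin d) (π : Fin d → Fin d)
    (htree : ∀ i : Fin d, ∃ k : ℕ, π^[k] i = r) :
    IsGreatest
      {L : ℝ | ∃ Q : (∀ i, X i) → ℝ, (∀ x, 0 < Q x) ∧ (∑ x, Q x = 1) ∧
        (∀ x, Q x = marg Q r (x r) *
          ∏ i ∈ Finset.univ.filter (fun i => i ≠ r), condProb Q i (π i) (x i) (x (π i))) ∧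
        L = ∑ k, Real.log (Q (z k))}
      ((n : ℝ) *
        ((∑ i ∈ Finset.univ.filter (fun i => i ≠ r),
            mutualInfo (pairMarg (empDist z) i (π i))) -
          ∑ i, entropy (marg (empDist z) i))) := by
  have hn : (n : ℝ) ≠ 0 := fun hn => (hemp (Classical.arbitrary _)).ne' (by simp [empDist, hn])
  have hsum : ∑ x, empDist z x = 1 := by simpa [hn] using sum_empDist_mul z fun _ => 1
  have hloglik : ∀ Q : (∀ i, X i) → ℝ,
      ∑ k, Real.log (Q (z k)) = n * ∑ x, empDist z x * Real.log (Q x) := fun Q => by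
    rw [sum_empDist_mul, mul_div_cancel₀ _ hn]
  rw [← sum_mul_log_treeProj_self htree hemp]
  refine ⟨⟨treeProj (empDist z) r π, treeProj_pos htree hemp,
    (sum_treeProj htree hemp).trans hsum,
    fun x => (congrFun (treeProj_treeProj htree hemp) x).symm, (hloglik _).symm⟩, ?_⟩
  rintro L ⟨Q, hQ, hQsum, hQfac, rfl⟩
  rw [hloglik]
  exact mul_le_mul_of_nonneg_left (sum_mul_log_le_sum_mul_log_treeProj htree hemp hQ
    (hQsum.trans hsum.symm) hQfac) n.cast_nonneg

/-- Maximum-likelihood tree structure (equation (2) of the paper): for a rooted spanning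
tree `T` (root `r`, parent map `π`), the maximum of the log-likelihood `Σ_k ln Q(z_k)` over
all everywhere-positive pmfs `Q` that factorize along `T` equals
`n (Σ_{i ≠ r} I(P̂_{X_i, X_{π(i)}}) − Σ_i H(P̂_{X_i}))`, where `P̂` is the empirical pmf of
the sample. In particular, since `Σ_i H(P̂_{X_i})` does not depend on `T`, the spanning tree
maximizing the likelihood is exactly the maximum-weight spanning tree with edge weights
given by the empirical mutual informations. -/
theorem maxLoglikelihood_tree_eq {d : ℕ} (hd : 2 ≤ d) {X : Fin d → Type*}
    [∀ i, Fintype (X i)] [∀ i, Nonempty (X i)] [∀ i, DecidableEq (X i)]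
    (n : ℕ) (hn : 1 ≤ n) (z : Fin n → (∀ i, X i))
    (hemp : ∀ x : ∀ i, X i, 0 < empDist z x)
    (r : Fin d) (π : Fin d → Fin d)
    (htree : ∀ i : Fin d, ∃ k : ℕ, π^[k] i = r) :
    IsGreatest
      {L : ℝ | ∃ Q : (∀ i, X i) → ℝ, (∀ x, 0 < Q x) ∧ (∑ x, Q x = 1) ∧
        (∀ x, Q x = marg Q r (x r) *
          ∏ i ∈ Finset.univ.filter (fun i => i ≠ r), condProb Q i (π i) (x i) (x (π i))) ∧
        L = ∑ k, Real.log (Q (z k))}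
      ((n : ℝ) *
        ((∑ i ∈ Finset.univ.filter (fun i => i ≠ r),
            mutualInfo (pairMarg (empDist z) i (π i))) -
          ∑ i, entropy (marg (empDist z) i))) :=
  maxLoglikelihood_tree_eq_general n z hemp r π htree
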